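/- Let α: H¹(M,ℝ) → ℝ be a convex superlinear function (Mather's alpha function) on a finite-dimensional real vector space, and for c ∈ H¹(M,ℝ) let F(c) be the union of all flats of α containing c in their relative interior, where a flat is a closed convex set on which α is affine. Then F(c) is itself a flat of α. -/

import Mathlib

/-!
Take a subgradient `l` of `α` at `c`. Every flat having `c` in its relative interior lies in
the contact set `E = {x | α x ≤ α c + l (x - c)}`, a closed convex set on which `α` is affine.
The subspaces along which `c` is a relative interior point of `E` are closed under sums, so in
finite dimension there is a greatest one, `U`; then the union of the flats is exactly
`E ∩ (c + U)`, which is a flat.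
-/

open Set

noncomputable section

variable {V : Type*} [NormedAddCommGroup V] [NormedSpace ℝ V]

/-- A flat of `α`: a closed convex set on which `α` is affine. -/
def IsFlat (α : V → ℝ) (K : Set V) : Prop :=
  IsClosed K ∧ Convex ℝ K ∧ ∃ (l : V →ₗ[ℝ] ℝ) (r : ℝ), ∀ x ∈ K, α x = l x + r

/-- The direction space `VK = Vect(K - K)` of a convex set. -/
def flatSpan (K : Set V) : Submodule ℝ V :=
  Submodule.span ℝ { v : V | ∃ x ∈ K, ∃ y ∈ K, v = x - y }

/-- `c` lies in the relative interior of `K`: some neighborhood of `0` in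
`VK` translated by `c` is contained in `K`. -/
def InRelInterior (c : V) (K : Set V) : Prop :=
  ∃ ε > 0, ∀ v ∈ (flatSpan K : Set V), ‖v‖ < ε → c + v ∈ K

section Subgradient

variable {E : Type*} [AddCommGroup E] [Module ℝ E] [TopologicalSpace E]

/-- Separate `(c, f c)` from the open convex strict epigraph of `f`; the separating functional
has a negative vertical component, and rescaling it gives the subgradient. -/
theorem ConvexOn.exists_subgradient [IsTopologicalAddGroup E] [ContinuousSMul ℝ E] {f : E → ℝ}
    (hf : ConvexOn ℝ univ f) (hcont : Continuous f) (c : E) :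
    ∃ l : StrongDual ℝ E, ∀ x, f c + l (x - c) ≤ f x := by
  have hopen : IsOpen {p : E × ℝ | p.1 ∈ univ ∧ f p.1 < p.2} := by
    simpa using isOpen_lt (hcont.comp continuous_fst) continuous_snd
  obtain ⟨φ, hφ⟩ := geometric_hahn_banach_open_point hf.convex_strict_epigraph hopen
    (by simp : (c, f c) ∉ {p : E × ℝ | p.1 ∈ univ ∧ f p.1 < p.2})
  set a := φ (0, 1)
  have hsplit : ∀ x t, φ (x, t) = φ (x, 0) + t * a := fun x t => by
    rw [show ((x, t) : E × ℝ) = (x, 0) + t • (0, 1) by ext <;> simp, map_add, map_smul,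
      smul_eq_mul]
  have hsep : ∀ x t, f x < t → φ (x, 0) + t * a < φ (c, 0) + f c * a := fun x t h => by
    have := hφ (x, t) ⟨mem_univ x, h⟩
    rwa [hsplit x t, hsplit c (f c)] at this
  have ha : a < 0 := by nlinarith [hsep c (f c + 1) (by linarith)]
  have hsupp : ∀ x, φ (x, 0) + f x * a ≤ φ (c, 0) + f c * a := fun x =>
    le_of_forall_pos_lt_add fun ε hε => by
      have h := hsep x (f x + ε / -a) (by linarith [div_pos hε (neg_pos.2 ha)])
      rw [add_mul, div_neg, neg_mul, div_mul_cancel₀ ε ha.ne] at h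
      linarith
  refine ⟨(-a)⁻¹ • φ.comp (ContinuousLinearMap.inl ℝ E ℝ), fun x => ?_⟩
  have hx : φ (x - c, 0) = φ (x, 0) - φ (c, 0) := by
    rw [← map_sub, Prod.mk_sub_mk, sub_zero]
  have := hsupp x
  simp only [smul_apply, ContinuousLinearMap.comp_apply,
    ContinuousLinearMap.inl_apply, hx, smul_eq_mul]
  rw [← le_sub_iff_add_le', inv_mul_le_iff₀ (neg_pos.2 ha)]
  nlinarith

/-- When `l` is a subgradient of `f` at `c`, this is the set where `f` coincides with its
supporting hyperplane at `c`. -/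
def contactSet (f : E → ℝ) (c : E) (l : StrongDual ℝ E) : Set E :=
  {x | f x ≤ f c + l (x - c)}

theorem isClosed_contactSet [IsTopologicalAddGroup E] {f : E → ℝ} (hf : Continuous f) (c : E)
    (l : StrongDual ℝ E) : IsClosed (contactSet f c l) :=
  isClosed_le hf (by fun_prop)

theorem convex_contactSet {f : E → ℝ} (hf : ConvexOn ℝ univ f) (c : E) (l : StrongDual ℝ E) :
    Convex ℝ (contactSet f c l) := by
  convert (hf.sub ((l : E →ₗ[ℝ] ℝ).concaveOn convex_univ)).convex_le (f c - l c) using 1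
  ext x
  simp only [contactSet, map_sub, mem_ofPred_eq, mem_univ, true_and, Pi.sub_apply,
    ContinuousLinearMap.coe_coe]
  constructor <;> intro <;> linarith

end Subgradient

theorem Submodule.exists_norm_le_of_mem_sup [FiniteDimensional ℝ V] (p q : Submodule ℝ V) :
    ∃ C > 0, ∀ v ∈ p ⊔ q, ∃ a ∈ p, ∃ b ∈ q, a + b = v ∧ ‖a‖ ≤ C * ‖v‖ ∧ ‖b‖ ≤ C * ‖v‖ := by
  let f : p × q →ₗ[ℝ] ↥(p ⊔ q) :=
    (p.subtype.coprod q.subtype).codRestrict _ fun x => add_mem_sup x.1.2 x.2.2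
  have hf : Function.Surjective f := by
    rintro ⟨v, hv⟩
    obtain ⟨a, ha, b, hb, rfl⟩ := mem_sup.1 hv
    exact ⟨(⟨a, ha⟩, ⟨b, hb⟩), rfl⟩
  obtain ⟨C, hC, hpre⟩ := f.toContinuousLinearMap.exists_preimage_norm_le hf
  refine ⟨C, hC, fun v hv => ?_⟩
  obtain ⟨⟨a, b⟩, hab, hnorm⟩ := hpre ⟨v, hv⟩
  exact ⟨a, a.2, b, b.2, congrArg Subtype.val hab, (norm_fst_le _).trans hnorm,
    (norm_snd_le _).trans hnorm⟩

/-- `InRelInterior c K` is `InInteriorAlong (flatSpan K) c K`. -/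
def InInteriorAlong (U : Submodule ℝ V) (c : V) (s : Set V) : Prop :=
  ∃ ε > 0, ∀ v ∈ U, ‖v‖ < ε → c + v ∈ s

namespace InInteriorAlong

variable {U U₁ U₂ : Submodule ℝ V} {c : V} {s t : Set V}

theorem bot (hc : c ∈ s) : InInteriorAlong ⊥ c s :=
  ⟨1, one_pos, fun v hv _ => by rwa [(Submodule.mem_bot ℝ).1 hv, add_zero]⟩

theorem mono (h : InInteriorAlong U c s) (hst : s ⊆ t) : InInteriorAlong U c t :=
  let ⟨ε, hε, hs⟩ := h
  ⟨ε, hε, fun v hv hvε => hst (hs v hv hvε)⟩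

/-- Split `v = a + b` with `a ∈ U₁`, `b ∈ U₂` of norm `O(‖v‖)`: then `c + v` is the midpoint
of `c + 2a` and `c + 2b`. -/
theorem sup [FiniteDimensional ℝ V] (hs : Convex ℝ s) (h₁ : InInteriorAlong U₁ c s)
    (h₂ : InInteriorAlong U₂ c s) : InInteriorAlong (U₁ ⊔ U₂) c s := by
  obtain ⟨ε₁, hε₁, h₁⟩ := h₁
  obtain ⟨ε₂, hε₂, h₂⟩ := h₂
  obtain ⟨C, hC, hdec⟩ := U₁.exists_norm_le_of_mem_sup U₂
  refine ⟨min ε₁ ε₂ / (2 * C), by positivity, fun v hv hvε => ?_⟩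
  obtain ⟨a, ha, b, hb, rfl, hna, hnb⟩ := hdec v hv
  rw [lt_div_iff₀ (by positivity)] at hvε
  have ha' : c + (2 : ℝ) • a ∈ s := h₁ _ (U₁.smul_mem 2 ha) <| by
    rw [norm_smul, Real.norm_two]; linarith [min_le_left ε₁ ε₂]
  have hb' : c + (2 : ℝ) • b ∈ s := h₂ _ (U₂.smul_mem 2 hb) <| by
    rw [norm_smul, Real.norm_two]; linarith [min_le_right ε₁ ε₂]
  have hmid : c + (a + b) = (1 / 2 : ℝ) • (c + (2 : ℝ) • a) + (1 / 2 : ℝ) • (c + (2 : ℝ) • b) := by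
    module
  rw [hmid]
  exact hs ha' hb' (by norm_num) (by norm_num) (by norm_num)

/-- Sums of such subspaces are again such subspaces, so by the ascending chain condition their
supremum is one of them. -/
theorem exists_greatest [FiniteDimensional ℝ V] (hs : Convex ℝ s) (hc : c ∈ s) :
    ∃ U, InInteriorAlong U c s ∧ ∀ U', InInteriorAlong U' c s → U' ≤ U :=
  ⟨_, CompleteLattice.WellFoundedGT.isSupClosedCompact _ inferInstance
      {U | InInteriorAlong U c s} ⟨⊥, bot hc⟩ (fun _ h₁ _ h₂ => h₁.sup hs h₂),
    fun _ h => le_sSup h⟩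

end InInteriorAlong

theorem flatSpan_le_of_subset_mk' {K : Set V} {c : V} {U : Submodule ℝ V}
    (h : K ⊆ AffineSubspace.mk' c U) : flatSpan K ≤ U :=
  Submodule.span_le.2 <| by
    rintro _ ⟨x, hx, y, hy, rfl⟩
    simpa using U.sub_mem (AffineSubspace.mem_mk'.1 (h hx)) (AffineSubspace.mem_mk'.1 (h hy))

theorem InInteriorAlong.inRelInterior_inter_mk' {U : Submodule ℝ V} {c : V} {s : Set V}
    (h : InInteriorAlong U c s) : InRelInterior c (s ∩ AffineSubspace.mk' c U) :=
  let ⟨ε, hε, hs⟩ := h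
  ⟨ε, hε, fun v hv hvε =>
    have hvU := flatSpan_le_of_subset_mk' inter_subset_right hv
    ⟨hs v hvU hvε, AffineSubspace.mem_mk'.2 (by simpa using hvU)⟩⟩

namespace InRelInterior

variable {c : V} {K : Set V}

theorem mem (h : InRelInterior c K) : c ∈ K := by
  obtain ⟨ε, hε, hK⟩ := h
  simpa using hK 0 (zero_mem _) (by simpa using hε)

theorem subset_mk' (h : InRelInterior c K) : K ⊆ AffineSubspace.mk' c (flatSpan K) :=
  fun x hx => AffineSubspace.mem_mk'.2 (Submodule.subset_span ⟨x, hx, c, h.mem, rfl⟩)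

end InRelInterior

section Flat

variable {α : V → ℝ} {c : V} {l : StrongDual ℝ V} {K : Set V}

/-- A flat through `c` in its relative interior contains the point `c - t (x - c)` opposite to
each of its points `x`, which forces the affine function `α` to grow along `x - c` no faster
than the supporting hyperplane. -/
theorem IsFlat.subset_contactSet (hl : ∀ x, α c + l (x - c) ≤ α x) (hK : IsFlat α K)
    (hc : InRelInterior c K) : K ⊆ contactSet α c l := by
  have hcK := hc.mem
  obtain ⟨-, -, m, r, hm⟩ := hK
  obtain ⟨ε, hε, hrel⟩ := hc
  intro x hx
  set d := x - c
  have hd : d ∈ flatSpan K := Submodule.subset_span ⟨x, hx, c, hcK, rfl⟩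
  set t := ε / (‖d‖ + 1)
  have ht : 0 < t := by positivity
  have hy : c - t • d ∈ K := by
    rw [sub_eq_add_neg, ← neg_smul]
    refine hrel _ (Submodule.smul_mem _ _ hd) ?_
    rw [norm_smul, norm_neg, Real.norm_of_nonneg ht.le, div_mul_eq_mul_div,
      div_lt_iff₀ (by positivity)]
    nlinarith [norm_nonneg d]
  have hmd : m d ≤ l d := by
    have h := hl (c - t • d)
    rw [hm _ hy, hm c hcK] at h
    simp only [sub_sub_cancel_left, map_neg, map_sub, map_smul, smul_eq_mul] at h
    exact le_of_mul_le_mul_left (by linarith) ht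
  have hmx : m d = m x - m c := map_sub m x c
  show α x ≤ α c + l d
  rw [hm x hx, hm c hcK]
  linarith

theorem isFlat_of_subset_contactSet (hl : ∀ x, α c + l (x - c) ≤ α x) (hKc : IsClosed K)
    (hKconv : Convex ℝ K) (hK : K ⊆ contactSet α c l) : IsFlat α K :=
  ⟨hKc, hKconv, l, α c - l c, fun x hx => by
    have := hK hx
    have := hl x
    simp only [contactSet, mem_ofPred_eq, map_sub, ContinuousLinearMap.coe_coe] at *
    linarith⟩

end Flat

theorem union_of_flats_is_flat_general [FiniteDimensional ℝ V]
    (α : V → ℝ) (hconv : ConvexOn ℝ Set.univ α)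
    (c : V) :
    IsFlat α (⋃₀ { K : Set V | IsFlat α K ∧ InRelInterior c K }) := by
  have hcont : Continuous α := hconv.locallyLipschitz.continuous
  obtain ⟨l, hl⟩ := hconv.exists_subgradient hcont c
  set E := contactSet α c l
  have hE : Convex ℝ E := convex_contactSet hconv c l
  obtain ⟨U, hU, hmax⟩ := InInteriorAlong.exists_greatest hE (show c ∈ E by simp [E, contactSet])
  set G := E ∩ AffineSubspace.mk' c U
  have hG : IsFlat α G :=
    isFlat_of_subset_contactSet hl ((isClosed_contactSet hcont c l).inter
      (AffineSubspace.closed_of_finiteDimensional _)) (hE.inter (AffineSubspace.convex _))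
      inter_subset_left
  have hsub : ∀ K, IsFlat α K → InRelInterior c K → K ⊆ G := fun K hK hc x hx =>
    have hKE := hK.subset_contactSet hl hc
    ⟨hKE hx, AffineSubspace.mem_mk'.2
      (hmax _ (InInteriorAlong.mono hc hKE) (AffineSubspace.mem_mk'.1 (hc.subset_mk' hx)))⟩
  have hGmem : G ∈ {K : Set V | IsFlat α K ∧ InRelInterior c K} :=
    ⟨hG, hU.inRelInterior_inter_mk'⟩
  rwa [Subset.antisymm (sUnion_subset fun K hK => hsub K hK.1 hK.2) (subset_sUnion_of_mem hGmem)]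

/-- for a convex superlinear function `α` on a finite-dimensional
space, the union `F(c)` of all flats containing `c` in their relative interior
is itself a flat of `α`. -/
theorem union_of_flats_is_flat [FiniteDimensional ℝ V]
    (α : V → ℝ) (hconv : ConvexOn ℝ Set.univ α)
    (hsl : ∀ C : ℝ, ∃ R : ℝ, ∀ x : V, R ≤ ‖x‖ → C * ‖x‖ ≤ α x)
    (c : V) :
    IsFlat α (⋃₀ { K : Set V | IsFlat α K ∧ InRelInterior c K }) :=
  union_of_flats_is_flat_general α hconv c

end
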